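/- arXiv:2512.18153 — 3 statements merged into one kernel-verified Lean document; each statement's English description precedes it below -/
import Mathlib

section
/- Orbit-Summability Fixed Point Theorem: Let (M,d) be a complete metric space and f : M → M a map such that for every n ≥ 0 the function x ↦ d(f^n(x), f^{n+1}(x)) is lower semicontinuous. Then f has a fixed point if and only if there exists x ∈ M with Σ_{n=0}^∞ d(f^n(x), f^{n+1}(x)) < ∞. -/
theorem orbit_summability_fixed_point {M : Type*} [MetricSpace M] [CompleteSpace M]
    (f : M → M)
    (hlsc : ∀ n : ℕ, LowerSemicontinuous (fun x => dist (f^[n] x) (f^[n+1] x))) :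
    (∃ p : M, f p = p) ↔ (∃ x : M, Summable (fun n : ℕ => dist (f^[n] x) (f^[n+1] x))) := by
  constructor
  · rintro ⟨p, hp⟩
    refine ⟨p, ?_⟩
    have h : ∀ n : ℕ, f^[n] p = p := fun n => Function.iterate_fixed hp n
    have : (fun n : ℕ => dist (f^[n] p) (f^[n+1] p)) = fun _ => 0 := by
      funext n; simp [h]
    rw [this]
    exact summable_zero
  · rintro ⟨x, hx⟩
    -- orbit is Cauchy
    have hcauchy : CauchySeq (fun n => f^[n] x) := cauchySeq_of_summable_dist hx
    obtain ⟨p, hp⟩ := cauchySeq_tendsto_of_complete hcauchy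
    refine ⟨p, ?_⟩
    -- distances tend to 0
    have hterm : Filter.Tendsto (fun n : ℕ => dist (f^[n] x) (f^[n+1] x)) Filter.atTop (nhds 0) :=
      hx.tendsto_atTop_zero
    -- LSC of g := fun y => dist y (f y) at p
    have hg := hlsc 0
    simp only [Function.iterate_zero, Function.iterate_one, id] at hg
    by_contra hne
    have hpos : 0 < dist p (f p) := dist_pos.mpr (fun h => hne h.symm)
    have hhalf : dist p (f p) / 2 < dist p (f p) := by linarith
    have hev := (hg p) (dist p (f p) / 2) hhalf
    have hev2 : ∀ᶠ n in Filter.atTop, dist p (f p) / 2 < dist (f^[n] x) (f (f^[n] x)) :=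
      hp.eventually hev
    have hev3 : ∀ᶠ n in Filter.atTop, dist (f^[n] x) (f^[n+1] x) < dist p (f p) / 2 :=
      hterm.eventually_lt_const (by linarith)
    obtain ⟨n, h2, h3⟩ := (hev2.and hev3).exists
    rw [Function.iterate_succ_apply'] at h3
    linarith
end

section
/- Under the hypotheses of the Orbit-Summability Theorem, if x has a summable orbit then the limit p of the orbit sequence x_n = f^n(x) satisfies φ_f(p) = 0, where φ_f(y) = Σ_{n=0}^∞ d(f^n(y), f^{n+1}(y)); in particular f(p) = p. -/
theorem orbit_limit_potential_zero {M : Type*} [MetricSpace M] [CompleteSpace M]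
    (f : M → M)
    (hlsc : ∀ n : ℕ, LowerSemicontinuous (fun x => dist (f^[n] x) (f^[n+1] x)))
    (x : M) (hsum : Summable (fun n : ℕ => dist (f^[n] x) (f^[n+1] x)))
    (p : M) (hlim : Filter.Tendsto (fun n : ℕ => f^[n] x) Filter.atTop (nhds p)) :
    (∑' n : ℕ, ENNReal.ofReal (dist (f^[n] p) (f^[n+1] p))) = 0 ∧ f p = p := by
  have key : ∀ n : ℕ, dist (f^[n] p) (f^[n+1] p) = 0 := by
    intro n
    by_contra h
    have hpos : 0 < dist (f^[n] p) (f^[n+1] p) :=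
      lt_of_le_of_ne dist_nonneg (Ne.symm h)
    have hev : ∀ᶠ y in nhds p,
        dist (f^[n] p) (f^[n+1] p) / 2 < dist (f^[n] y) (f^[n+1] y) :=
      hlsc n p _ (half_lt_self hpos)
    have h2 : ∀ᶠ k : ℕ in Filter.atTop,
        dist (f^[n] p) (f^[n+1] p) / 2 < dist (f^[n+k] x) (f^[n+1+k] x) := by
      filter_upwards [hlim.eventually hev] with k hk
      simpa [Function.iterate_add_apply] using hk
    have h3 : Filter.Tendsto (fun k : ℕ => dist (f^[n+k] x) (f^[n+1+k] x))
        Filter.atTop (nhds 0) := by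
      have := hsum.tendsto_atTop_zero
      have h4 := this.comp (Filter.tendsto_add_atTop_nat n)
      convert h4 using 2 with k
      simp only [Function.comp]
      rw [show n + 1 + k = (n + k) + 1 by ring, show k + n = n + k by ring]
    have h5 : ∀ᶠ k : ℕ in Filter.atTop,
        dist (f^[n+k] x) (f^[n+1+k] x) < dist (f^[n] p) (f^[n+1] p) / 2 :=
      (h3.eventually (gt_mem_nhds (half_pos hpos)))
    obtain ⟨k, hk1, hk2⟩ := (h2.and h5).exists
    linarith
  constructor
  · have he : (fun n : ℕ => ENNReal.ofReal (dist (f^[n] p) (f^[n+1] p)))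
        = fun _ => (0 : ENNReal) := funext fun n => by rw [key n, ENNReal.ofReal_zero]
    rw [he, tsum_zero]
  · have := key 0
    simp only [Function.iterate_zero_apply, Function.iterate_one] at this
    exact (dist_eq_zero.mp this).symm
end

section
/- Caristi via orbit-summability: Let (M,d) be a nonempty complete metric space, f : M → M, and φ : M → ℝ bounded below with d(x, f(x)) ≤ φ(x) − φ(f(x)) for all x. If moreover each function x ↦ d(f^n(x), f^{n+1}(x)) is lower semicontinuous, then f has a fixed point. -/
theorem caristi_via_orbit_summability {M : Type*} [MetricSpace M] [CompleteSpace M]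
    [Nonempty M] (f : M → M) (φ : M → ℝ) (hbdd : BddBelow (Set.range φ))
    (hcar : ∀ x : M, dist x (f x) ≤ φ x - φ (f x))
    (hlsc : ∀ n : ℕ, LowerSemicontinuous (fun x => dist (f^[n] x) (f^[n+1] x))) :
    ∃ p : M, f p = p := by
  obtain ⟨x₀⟩ := ‹Nonempty M›
  set a : ℕ → M := fun n => f^[n] x₀ with ha
  obtain ⟨c, hc⟩ := hbdd
  have hstep : ∀ n, dist (a n) (a (n + 1)) ≤ φ (a n) - φ (a (n + 1)) := by
    intro n
    have : a (n + 1) = f (a n) := by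
      simp [ha, Function.iterate_succ_apply']
    rw [this]
    exact hcar (a n)
  have hsum : Summable (fun n => dist (a n) (a (n + 1))) := by
    apply summable_of_sum_range_le (fun n => dist_nonneg)
    intro n
    calc ∑ i ∈ Finset.range n, dist (a i) (a (i + 1))
        ≤ ∑ i ∈ Finset.range n, (φ (a i) - φ (a (i + 1))) :=
          Finset.sum_le_sum fun i _ => hstep i
      _ = φ (a 0) - φ (a n) := Finset.sum_range_sub' (fun i => φ (a i)) n
      _ ≤ φ (a 0) - c := by
          have : c ≤ φ (a n) := hc ⟨a n, rfl⟩
          linarith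
  have hcauchy : CauchySeq a := cauchySeq_of_summable_dist hsum
  obtain ⟨p, hp⟩ := cauchySeq_tendsto_of_complete hcauchy
  refine ⟨p, ?_⟩
  have hzero : Filter.Tendsto (fun n => dist (a n) (a (n + 1))) Filter.atTop (nhds 0) :=
    hsum.tendsto_atTop_zero
  have hg : LowerSemicontinuous (fun x => dist x (f x)) := by
    have := hlsc 0
    simpa using this
  by_contra hne
  have hpos : 0 < dist p (f p) := dist_pos.mpr fun h => hne h.symm
  have h1 : ∀ᶠ x in nhds p, dist p (f p) / 2 < dist x (f x) :=
    hg p _ (by linarith)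
  have h2 : ∀ᶠ n in Filter.atTop, dist p (f p) / 2 < dist (a n) (f (a n)) :=
    hp.eventually h1
  have h3 : ∀ᶠ n in Filter.atTop, dist (a n) (a (n + 1)) < dist p (f p) / 2 := by
    have := hzero.eventually (eventually_lt_nhds (by linarith : (0:ℝ) < dist p (f p) / 2))
    exact this
  obtain ⟨n, hn2, hn3⟩ := (h2.and h3).exists
  have : a (n + 1) = f (a n) := by simp [ha, Function.iterate_succ_apply']
  rw [this] at hn3
  linarith
end
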